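/- (Theorem 4, L∞ lower bound) Let p ≥ 0 be an integer. There exists a constant C_∞ > 0, depending only on p (independent of h, u and u^R), with the following property. Let a < b, N a positive integer, h = (b−a)/N, x_i = a + i h. Let u : [a,b] → ℝ be (p+1)-times continuously differentiable, and let u^R : (a,b) → ℝ coincide on each cell (x_i, x_{i+1}) with a polynomial of degree at most p. For 1 ≤ i ≤ N−1 and 0 ≤ k ≤ p set J^k_i = (d^k/dx^k)u^R(x_i⁺) − (d^k/dx^k)u^R(x_i⁻) and D^k_i = J^k_i / h^{p+1−k}. Then sup_{x ∈ (a,b)} |u(x) − u^R(x)| ≥ h^{p+1} [ max_{1 ≤ i ≤ N−1} √(Q(D^0_i, …, D^p_i)) − C_∞ sup_{x ∈ [a,b]} |u^{(p+1)}(x)| ]. -/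

import Mathlib

/-!
Fix an interior node `xᵢ`, let `S = sup |u - uᴿ|` and `M = sup |u⁽ᵖ⁺¹⁾|`. On the window
`[xᵢ - h/2, xᵢ + h/2]` the Taylor polynomial `T` of `u` is within `M hᵖ⁺¹ / p!` of `u`, hence within
`S + M hᵖ⁺¹ / p!` of the left piece on the left half-window and of the right piece on the right one.
After the rescaling `x = xᵢ + h ξ`, `f_D` is the half jump `(q_right - q_left) / (2 hᵖ⁺¹)` (Taylor
expansion of the jump at `xᵢ`), so the competitor `v = (T - (q_left + q_right) / 2) / hᵖ⁺¹` gives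
`v + f_D = (T - q_left) / hᵖ⁺¹` on `(-1/2, 0)` and `v - f_D = (T - q_right) / hᵖ⁺¹` on `(0, 1/2)`.
Thus `Q(D) ≤ (S / hᵖ⁺¹ + M / p!)²`, which is the theorem with `C_∞ = 1 / p!`.
-/

open MeasureTheory Polynomial

/-- `fd p d ξ = (1/2) Σ_{k=0}^p (d_k/k!) ξ^k`. -/
noncomputable def fd (p : ℕ) (d : Fin (p+1) → ℝ) (ξ : ℝ) : ℝ :=
  (1/2) * ∑ k : Fin (p+1), d k / (Nat.factorial k) * ξ ^ (k : ℕ)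

/-- The error functional whose infimum over polynomials of degree ≤ p defines `Qform`. -/
noncomputable def Qerr (p : ℕ) (d : Fin (p+1) → ℝ) (v : Polynomial ℝ) : ℝ :=
  (∫ ξ in (-(1:ℝ)/2)..0, (v.eval ξ + fd p d ξ)^2) +
  (∫ ξ in (0:ℝ)..(1/2), (v.eval ξ - fd p d ξ)^2)

/-- `Q(d) = inf_{v ∈ P} Qerr p d v`. -/
noncomputable def Qform (p : ℕ) (d : Fin (p+1) → ℝ) : ℝ :=
  sInf {q : ℝ | ∃ v : Polynomial ℝ, v.natDegree ≤ p ∧ q = Qerr p d v}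

/-- The scaled jump vector `(D⁰,…,Dᵖ)` at a node `xi`, where `ql`/`qr` are the
polynomial pieces to the left/right of `xi`:
`Dᵏ = ((d^k/dx^k) qr(xi) - (d^k/dx^k) ql(xi)) / h^{p+1-k}`. -/
noncomputable def Dvec (p : ℕ) (h xi : ℝ) (ql qr : Polynomial ℝ) : Fin (p+1) → ℝ :=
  fun k => ((Polynomial.derivative^[(k:ℕ)] qr).eval xi -
            (Polynomial.derivative^[(k:ℕ)] ql).eval xi) / h^(p+1-(k:ℕ))

open Set
open scoped Nat

theorem iteratedDerivWithin_subset {𝕜 F : Type*} [NontriviallyNormedField 𝕜]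
    [NormedAddCommGroup F] [NormedSpace 𝕜 F] {f : 𝕜 → F} {s t : Set 𝕜} {n : ℕ} {x : 𝕜}
    (st : s ⊆ t) (hs : UniqueDiffOn 𝕜 s) (ht : UniqueDiffOn 𝕜 t) (hf : ContDiffOn 𝕜 n f t)
    (hx : x ∈ s) : iteratedDerivWithin n f s x = iteratedDerivWithin n f t x := by
  simp only [iteratedDerivWithin_eq_iteratedFDerivWithin, iteratedFDerivWithin_subset st hs ht hf hx]

theorem intervalIntegral_sq_le_of_abs_le {g : ℝ → ℝ} (hg : Continuous g) {c d B : ℝ}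
    (hcd : c ≤ d) (hB : ∀ ξ ∈ Ioo c d, |g ξ| ≤ B) : ∫ ξ in c..d, g ξ ^ 2 ≤ (d - c) * B ^ 2 := by
  rw [intervalIntegral.integral_of_le hcd, integral_Ioc_eq_integral_Ioo]
  calc ∫ ξ in Ioo c d, g ξ ^ 2 ≤ ∫ _ in Ioo c d, B ^ 2 :=
        setIntegral_mono_on ((hg.pow 2).integrableOn_Icc.mono_set Ioo_subset_Icc_self)
          (integrableOn_const measure_Ioo_lt_top.ne) measurableSet_Ioo
          fun ξ hξ => sq_le_sq' (abs_le.mp (hB ξ hξ)).1 (abs_le.mp (hB ξ hξ)).2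
    _ = (d - c) * B ^ 2 := by rw [setIntegral_const, Real.volume_real_Ioo_of_le hcd, smul_eq_mul]

theorem Polynomial.natDegree_comp_affine_le {R : Type*} [Semiring R] (P : R[X]) (a b : R) :
    (P.comp (C a * X + C b)).natDegree ≤ P.natDegree :=
  calc (P.comp (C a * X + C b)).natDegree ≤ P.natDegree * (C a * X + C b).natDegree :=
        natDegree_comp_le
    _ ≤ P.natDegree * 1 := Nat.mul_le_mul_left _ natDegree_linear_le
    _ = P.natDegree := mul_one _

theorem Polynomial.eval_eq_sum_range_iterate_derivative {K : Type*} [Field K] [CharZero K]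
    {P : K[X]} {p : ℕ} (hP : P.natDegree ≤ p) (x₀ x : K) :
    P.eval x = ∑ k ∈ Finset.range (p + 1), (derivative^[k] P).eval x₀ / k ! * (x - x₀) ^ k := by
  rw [← taylor_eval_sub x₀ P x, eval_eq_sum_range' (n := p + 1) (by rw [natDegree_taylor]; omega)]
  refine Finset.sum_congr rfl fun k _ => ?_
  rw [taylor_coeff, ← factorial_smul_hasseDeriv, LinearMap.smul_apply, eval_smul, nsmul_eq_mul]
  field_simp [Nat.factorial_ne_zero]

theorem continuous_fd (p : ℕ) (d : Fin (p + 1) → ℝ) : Continuous (fd p d) := by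
  unfold fd
  fun_prop

theorem Qerr_nonneg (p : ℕ) (d : Fin (p + 1) → ℝ) (v : ℝ[X]) : 0 ≤ Qerr p d v :=
  add_nonneg (intervalIntegral.integral_nonneg (by norm_num) fun _ _ => sq_nonneg _)
    (intervalIntegral.integral_nonneg (by norm_num) fun _ _ => sq_nonneg _)

theorem Qform_le_Qerr {p : ℕ} (d : Fin (p + 1) → ℝ) {v : ℝ[X]} (hv : v.natDegree ≤ p) :
    Qform p d ≤ Qerr p d v :=
  csInf_le ⟨0, by rintro _ ⟨w, -, rfl⟩; exact Qerr_nonneg p d w⟩ ⟨v, hv, rfl⟩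

theorem Qerr_le_sq {p : ℕ} {d : Fin (p + 1) → ℝ} {v : ℝ[X]} {B : ℝ}
    (hleft : ∀ ξ ∈ Ioo (-(1 : ℝ) / 2) 0, |v.eval ξ + fd p d ξ| ≤ B)
    (hright : ∀ ξ ∈ Ioo (0 : ℝ) (1 / 2), |v.eval ξ - fd p d ξ| ≤ B) :
    Qerr p d v ≤ B ^ 2 := by
  have h₁ := intervalIntegral_sq_le_of_abs_le (g := fun ξ => v.eval ξ + fd p d ξ)
    (v.continuous.add (continuous_fd p d)) (by norm_num) hleft
  have h₂ := intervalIntegral_sq_le_of_abs_le (g := fun ξ => v.eval ξ - fd p d ξ)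
    (v.continuous.sub (continuous_fd p d)) (by norm_num) hright
  unfold Qerr
  linarith

theorem fd_Dvec {p : ℕ} {h : ℝ} (hh : h ≠ 0) (xi : ℝ) {ql qr : ℝ[X]} (hql : ql.natDegree ≤ p)
    (hqr : qr.natDegree ≤ p) (ξ : ℝ) :
    fd p (Dvec p h xi ql qr) ξ = (qr - ql).eval (xi + h * ξ) / (2 * h ^ (p + 1)) := by
  unfold fd Dvec
  rw [eval_eq_sum_range_iterate_derivative ((natDegree_sub_le _ _).trans (max_le hqr hql)) xi,
    Fin.sum_univ_eq_sum_range (fun k => ((derivative^[k] qr).eval xi -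
      (derivative^[k] ql).eval xi) / h ^ (p + 1 - k) / k ! * ξ ^ k), Finset.mul_sum,
    Finset.sum_div]
  refine Finset.sum_congr rfl fun k hk => ?_
  have hpow : h ^ (p + 1) = h ^ (p + 1 - k) * h ^ k :=
    (pow_sub_mul_pow h (by rw [Finset.mem_range] at hk; omega)).symm
  simp only [iterate_derivative_sub, eval_sub, add_sub_cancel_left, mul_pow, hpow]
  field_simp

theorem Qform_Dvec_le {p : ℕ} {h xi B : ℝ} {ql qr T : ℝ[X]} (hh : 0 < h)
    (hql : ql.natDegree ≤ p) (hqr : qr.natDegree ≤ p) (hT : T.natDegree ≤ p)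
    (hleft : ∀ x ∈ Ioo (xi - h / 2) xi, |T.eval x - ql.eval x| ≤ B)
    (hright : ∀ x ∈ Ioo xi (xi + h / 2), |T.eval x - qr.eval x| ≤ B) :
    Qform p (Dvec p h xi ql qr) ≤ (B / h ^ (p + 1)) ^ 2 := by
  have hhp : 0 < h ^ (p + 1) := pow_pos hh _
  set v := C (h ^ (p + 1))⁻¹ * (T - C (1 / 2) * (ql + qr)).comp (C h * X + C xi)
  have hv : v.natDegree ≤ p := by
    refine (natDegree_C_mul_le _ _).trans ((natDegree_comp_affine_le _ _ _).trans ?_)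
    refine (natDegree_sub_le _ _).trans (max_le hT ((natDegree_C_mul_le _ _).trans ?_))
    exact (natDegree_add_le _ _).trans (max_le hql hqr)
  have hfd := fd_Dvec hh.ne' xi hql hqr
  refine (Qform_le_Qerr _ hv).trans (Qerr_le_sq (fun ξ hξ => ?_) (fun ξ hξ => ?_))
  · have hx : xi + h * ξ ∈ Ioo (xi - h / 2) xi := ⟨by nlinarith [hξ.1], by nlinarith [hξ.2]⟩
    have key : v.eval ξ + fd p (Dvec p h xi ql qr) ξ
        = (T.eval (xi + h * ξ) - ql.eval (xi + h * ξ)) / h ^ (p + 1) := by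
      simp only [v, hfd, eval_mul, eval_C, eval_comp, eval_sub, eval_add, eval_X, add_comm (h * ξ)]
      field_simp
      ring
    rw [key, abs_div, abs_of_pos hhp]
    exact div_le_div_of_nonneg_right (hleft _ hx) hhp.le
  · have hx : xi + h * ξ ∈ Ioo xi (xi + h / 2) := ⟨by nlinarith [hξ.1], by nlinarith [hξ.2]⟩
    have key : v.eval ξ - fd p (Dvec p h xi ql qr) ξ
        = (T.eval (xi + h * ξ) - qr.eval (xi + h * ξ)) / h ^ (p + 1) := by
      simp only [v, hfd, eval_mul, eval_C, eval_comp, eval_sub, eval_add, eval_X, add_comm (h * ξ)]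
      field_simp
      ring
    rw [key, abs_div, abs_of_pos hhp]
    exact div_le_div_of_nonneg_right (hright _ hx) hhp.le

theorem exists_polynomial_abs_sub_le_of_iteratedDerivWithin_le {u : ℝ → ℝ} {p : ℕ} {l r M : ℝ}
    (hlr : l ≤ r) (hu : ContDiffOn ℝ (p + 1) u (Icc l r))
    (hM : ∀ y ∈ Icc l r, |iteratedDerivWithin (p + 1) u (Icc l r) y| ≤ M) :
    ∃ T : ℝ[X], T.natDegree ≤ p ∧ ∀ x ∈ Icc l r, |u x - T.eval x| ≤ M * (r - l) ^ (p + 1) / p ! := by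
  refine ⟨∑ k ∈ Finset.range (p + 1),
    C ((k ! : ℝ)⁻¹ * iteratedDerivWithin k u (Icc l r) l) * (X - C l) ^ k, ?_, fun x hx => ?_⟩
  · refine natDegree_sum_le_of_forall_le _ _ fun k hk => (natDegree_C_mul_le _ _).trans ?_
    rw [natDegree_pow, natDegree_X_sub_C, mul_one]
    exact Nat.lt_succ_iff.mp (Finset.mem_range.mp hk)
  have hTaylor := taylor_mean_remainder_bound hlr hu hx hM
  have hM0 : 0 ≤ M := (abs_nonneg _).trans (hM l ⟨le_rfl, hlr⟩)
  rw [taylor_within_apply, Real.norm_eq_abs] at hTaylor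
  calc |u x - _| = |u x - ∑ k ∈ Finset.range (p + 1),
        ((k ! : ℝ)⁻¹ * (x - l) ^ k) • iteratedDerivWithin k u (Icc l r) l| := by
          simp only [eval_finsetSum, eval_mul, eval_C, eval_pow, eval_sub, eval_X, smul_eq_mul]
          ring_nf
    _ ≤ M * (x - l) ^ (p + 1) / p ! := hTaylor
    _ ≤ M * (r - l) ^ (p + 1) / p ! := by
          gcongr
          · linarith [hx.1]
          · exact hx.2

theorem pow_mul_sqrt_Qform_Dvec_sub_le {u : ℝ → ℝ} {p : ℕ} {h xi S M : ℝ} {ql qr : ℝ[X]}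
    (hh : 0 < h) (hql : ql.natDegree ≤ p) (hqr : qr.natDegree ≤ p)
    (hu : ContDiffOn ℝ (p + 1) u (Icc (xi - h / 2) (xi + h / 2)))
    (hM : ∀ y ∈ Icc (xi - h / 2) (xi + h / 2),
      |iteratedDerivWithin (p + 1) u (Icc (xi - h / 2) (xi + h / 2)) y| ≤ M)
    (hl : ∀ x ∈ Ioo (xi - h / 2) xi, |u x - ql.eval x| ≤ S)
    (hr : ∀ x ∈ Ioo xi (xi + h / 2), |u x - qr.eval x| ≤ S) :
    h ^ (p + 1) * (√(Qform p (Dvec p h xi ql qr)) - (p ! : ℝ)⁻¹ * M) ≤ S := by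
  have hhp : 0 < h ^ (p + 1) := pow_pos hh _
  obtain ⟨T, hT, hTu⟩ := exists_polynomial_abs_sub_le_of_iteratedDerivWithin_le (by linarith) hu hM
  rw [show xi + h / 2 - (xi - h / 2) = h by ring] at hTu
  have hM0 : 0 ≤ M := (abs_nonneg _).trans (hM xi ⟨by linarith, by linarith⟩)
  have hS0 : 0 ≤ S := (abs_nonneg _).trans (hl (xi - h / 4) ⟨by linarith, by linarith⟩)
  have hTq : ∀ q : ℝ[X], ∀ x ∈ Ioo (xi - h / 2) (xi + h / 2), |u x - q.eval x| ≤ S →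
      |T.eval x - q.eval x| ≤ M * h ^ (p + 1) / p ! + S := fun q x hx hq =>
    (abs_sub_le _ (u x) _).trans
      (add_le_add (by rw [abs_sub_comm]; exact hTu x (Ioo_subset_Icc_self hx)) hq)
  have hQ := Qform_Dvec_le hh hql hqr hT
    (fun x hx => hTq ql x ⟨hx.1, by linarith [hx.2]⟩ (hl x hx))
    (fun x hx => hTq qr x ⟨by linarith [hx.1], hx.2⟩ (hr x hx))
  have hsqrt : √(Qform p (Dvec p h xi ql qr)) ≤ (M * h ^ (p + 1) / p ! + S) / h ^ (p + 1) :=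
    Real.sqrt_le_iff.mpr ⟨by positivity, hQ⟩
  calc h ^ (p + 1) * (√(Qform p (Dvec p h xi ql qr)) - (p ! : ℝ)⁻¹ * M)
      ≤ h ^ (p + 1) * ((M * h ^ (p + 1) / p ! + S) / h ^ (p + 1) - (p ! : ℝ)⁻¹ * M) := by
        gcongr
    _ = S := by field_simp; ring

theorem Ioo_subset_cells_union_nodes {a h : ℝ} (hh : 0 < h) (N : ℕ) :
    Ioo a (a + N * h) ⊆ (⋃ j ∈ Finset.range N, Ioo (a + j * h) (a + (j + 1) * h)) ∪
      (fun j : ℕ => a + j * h) '' Ico 1 N := by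
  intro x hx
  set j := ⌊(x - a) / h⌋₊
  have hj : j * h ≤ x - a := (le_div_iff₀ hh).mp (Nat.floor_le (div_nonneg (by linarith [hx.1]) hh.le))
  have hj' : x - a < (j + 1) * h := (div_lt_iff₀ hh).mp (Nat.lt_floor_add_one _)
  have hjN : j < N := by
    have : (j : ℝ) < N := lt_of_mul_lt_mul_right (by linarith [hx.2]) hh.le
    exact_mod_cast this
  rcases (show a + j * h ≤ x by linarith).eq_or_lt with hxj | hxj
  · refine Or.inr ⟨j, ⟨Nat.one_le_iff_ne_zero.mpr fun hj0 => ?_, hjN⟩, hxj⟩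
    simp [hj0] at hxj
    linarith [hx.1]
  · exact Or.inl (mem_biUnion (Finset.mem_coe.mpr (Finset.mem_range.mpr hjN)) ⟨hxj, by linarith⟩)

theorem bddAbove_abs_sub_of_eq_eval_on_cells {u uR : ℝ → ℝ} {a h : ℝ} {N : ℕ} {q : ℕ → ℝ[X]}
    (hh : 0 < h) (hu : ContinuousOn u (Icc a (a + N * h)))
    (hcell : ∀ j < N, ∀ x ∈ Ioo (a + j * h) (a + (j + 1) * h), uR x = (q j).eval x) :
    BddAbove ((fun x => |u x - uR x|) '' Ioo a (a + N * h)) := by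
  refine BddAbove.mono (image_mono (Ioo_subset_cells_union_nodes hh N)) ?_
  rw [image_union, image_iUnion₂]
  refine BddAbove.union ((Finset.range N).finite_toSet.bddAbove_biUnion.mpr fun j hj => ?_)
    (((finite_Ico 1 N).image _).image _).bddAbove
  have hjN : (j : ℝ) + 1 ≤ N := by exact_mod_cast Finset.mem_range.mp hj
  have hcell_Icc : Ioo (a + j * h) (a + (j + 1) * h) ⊆ Icc a (a + N * h) :=
    Ioo_subset_Icc_self.trans (Icc_subset_Icc (by nlinarith [j.cast_nonneg (α := ℝ)])
      (by nlinarith))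
  refine ((isCompact_Icc.bddAbove_image ((hu.sub (q j).continuous.continuousOn).abs)).mono ?_)
  rintro _ ⟨x, hx, rfl⟩
  exact ⟨x, hcell_Icc hx, by simp only [Pi.sub_apply, hcell j (Finset.mem_range.mp hj) x hx]⟩

/-- Theorem 4 of the paper, L∞ lower bound:
`‖u - u^R‖_{L^∞(a,b)} ≥ h^{p+1} [ max_{1≤i≤N-1} √(Q(Dᵢ)) - C_∞ |u|_{W^{p+1}_∞} ]`,
stated equivalently as the bound holding for every interior node `i`. -/
theorem Linfty_lower_bound (p : ℕ) :
    ∃ Cinf : ℝ, 0 < Cinf ∧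
      ∀ (a b : ℝ), a < b → ∀ N : ℕ, 0 < N → ∀ h : ℝ, h = (b - a) / N →
      ∀ u : ℝ → ℝ, ContDiffOn ℝ (p+1) u (Set.Icc a b) →
      ∀ (uR : ℝ → ℝ) (q : ℕ → Polynomial ℝ),
        (∀ i < N, (q i).natDegree ≤ p) →
        (∀ i < N, ∀ x ∈ Set.Ioo (a + i*h) (a + (i+1)*h), uR x = (q i).eval x) →
        ∀ i ∈ Finset.Ico 1 N,
          sSup ((fun x => |u x - uR x|) '' Set.Ioo a b) ≥
            h^(p+1) *
              (Real.sqrt (Qform p (Dvec p h (a + i*h) (q (i-1)) (q i)))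
                - Cinf * sSup ((fun x =>
                    |iteratedDerivWithin (p+1) u (Set.Icc a b) x|) '' Set.Icc a b)) := by
  refine ⟨(p ! : ℝ)⁻¹, by positivity, ?_⟩
  intro a b hab N hN h hh u hu uR q hdeg hcell i hi
  obtain ⟨hi1, hiN⟩ := Finset.mem_Ico.mp hi
  have hpos : 0 < h := hh ▸ div_pos (sub_pos.mpr hab) (Nat.cast_pos.mpr hN)
  have hb : a + N * h = b := by rw [hh]; field_simp; ring
  have hS : ∀ j < N, ∀ x ∈ Ioo (a + j * h) (a + (j + 1) * h),
      |u x - (q j).eval x| ≤ sSup ((fun x => |u x - uR x|) '' Ioo a b) := by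
    intro j hj x hx
    have hjN : (j : ℝ) + 1 ≤ N := by exact_mod_cast hj
    rw [← hcell j hj x hx, ← hb]
    refine le_csSup (bddAbove_abs_sub_of_eq_eval_on_cells hpos (hb ▸ hu.continuousOn) hcell)
      (mem_image_of_mem _ ⟨by nlinarith [hx.1, j.cast_nonneg (α := ℝ)], by nlinarith [hx.2]⟩)
  have hi1' : (1 : ℝ) ≤ i := by exact_mod_cast hi1
  have hiN' : (i : ℝ) + 1 ≤ N := by exact_mod_cast hiN
  have hW : Icc (a + i * h - h / 2) (a + i * h + h / 2) ⊆ Icc a b :=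
    Icc_subset_Icc (by nlinarith) (by nlinarith)
  refine pow_mul_sqrt_Qform_Dvec_sub_le hpos (hdeg _ (by omega)) (hdeg i hiN) (hu.mono hW)
    (fun y hy => ?_) (fun x hx => hS (i - 1) (by omega) x ?_) (fun x hx => hS i hiN x ?_)
  · rw [iteratedDerivWithin_subset hW (uniqueDiffOn_Icc (by linarith)) (uniqueDiffOn_Icc hab)
      (by exact_mod_cast hu) hy]
    exact (hu.continuousOn_iteratedDerivWithin le_rfl (uniqueDiffOn_Icc hab)).abs.le_sSup_image_Icc
      (hW hy)
  · rw [Nat.cast_sub hi1]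
    push_cast
    constructor <;> linarith [hx.1, hx.2]
  · exact ⟨hx.1, by linarith [hx.2]⟩
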